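/- Let μ_S, μ_T be probability measures on ℝ^d with finite first moments, f : ℝ^d → [0,1] a labeling function, and H a set of hypotheses h : ℝ^d → ℝ such that every h ∈ H and f are A-Lipschitz. Define ε_μ(h) = E_{x∼μ}|h(x) − f(x)|. Then for every h ∈ H, ε_{μ_T}(h) ≤ ε_{μ_S}(h) + 2A · W₁(μ_S, μ_T). -/

import Mathlib

/-!
For any coupling `γ` of `μS` and `μT`, a `K`-Lipschitz `g` satisfies
`∫ g ∂μT - ∫ g ∂μS = ∫ (g y - g x) ∂γ ≤ K * ∫ ‖x - y‖ ∂γ` (the easy half of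
Kantorovich–Rubinstein duality); taking the infimum over couplings gives the bound with `W1`,
applied to `g = |h - f|`, which is `2A`-Lipschitz. A negative `A` is only possible on a
one-point space, where both sides are trivial.
-/

open MeasureTheory

/-- The 1-Wasserstein distance: infimum over couplings of the expected distance. -/
noncomputable def W1 {d : ℕ} (μ ν : Measure (EuclideanSpace ℝ (Fin d))) : ℝ :=
  sInf { r : ℝ | ∃ γ : Measure (EuclideanSpace ℝ (Fin d) × EuclideanSpace ℝ (Fin d)),
    γ.map Prod.fst = μ ∧ γ.map Prod.snd = ν ∧ r = ∫ p, ‖p.1 - p.2‖ ∂γ }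

section Coupling

variable {E : Type*} [NormedAddCommGroup E] [MeasurableSpace E] [BorelSpace E]

lemma LipschitzWith.integrable_of_integrable_norm {F : Type*} [NormedAddCommGroup F]
    [SecondCountableTopology F] {μ : Measure E} [IsFiniteMeasure μ] {K : NNReal} {g : E → F}
    (hg : LipschitzWith K g) (hμ : Integrable (fun x => ‖x‖) μ) : Integrable g μ := by
  refine ((hμ.const_mul K).add (integrable_const ‖g 0‖)).mono'
    hg.continuous.aestronglyMeasurable (ae_of_all _ fun x => ?_)
  calc ‖g x‖ ≤ ‖g x - g 0‖ + ‖g 0‖ := norm_le_norm_sub_add _ _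
    _ ≤ K * ‖x‖ + ‖g 0‖ := by simpa using hg.norm_sub_le x 0

lemma integral_sub_integral_le_of_coupling [SecondCountableTopology E] {μ ν : Measure E}
    [IsFiniteMeasure μ] [IsFiniteMeasure ν] {K : NNReal} {g : E → ℝ} (hg : LipschitzWith K g)
    (hμ : Integrable (fun x => ‖x‖) μ) (hν : Integrable (fun x => ‖x‖) ν)
    {γ : Measure (E × E)} (hγμ : γ.map Prod.fst = μ) (hγν : γ.map Prod.snd = ν) :
    ∫ x, g x ∂ν - ∫ x, g x ∂μ ≤ K * ∫ p, ‖p.1 - p.2‖ ∂γ := by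
  subst hγμ hγν
  have hg₁ : Integrable (fun p => g p.1) γ :=
    (hg.integrable_of_integrable_norm hμ).comp_measurable measurable_fst
  have hg₂ : Integrable (fun p => g p.2) γ :=
    (hg.integrable_of_integrable_norm hν).comp_measurable measurable_snd
  have hcost : Integrable (fun p : E × E => ‖p.1 - p.2‖) γ :=
    ((hμ.comp_measurable measurable_fst).add (hν.comp_measurable measurable_snd)).mono'
      (by fun_prop) (ae_of_all _ fun p => by simpa using norm_sub_le p.1 p.2)
  rw [integral_map measurable_snd.aemeasurable hg.continuous.aestronglyMeasurable,
    integral_map measurable_fst.aemeasurable hg.continuous.aestronglyMeasurable,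
    ← integral_sub hg₂ hg₁, ← integral_const_mul]
  refine integral_mono (hg₂.sub hg₁) (hcost.const_mul K) fun p => ?_
  calc g p.2 - g p.1 ≤ ‖g p.2 - g p.1‖ := le_abs_self _
    _ ≤ K * ‖p.2 - p.1‖ := hg.norm_sub_le p.2 p.1
    _ = K * ‖p.1 - p.2‖ := by rw [norm_sub_rev]

end Coupling

section Wasserstein

variable {d : ℕ} {μ ν : Measure (EuclideanSpace ℝ (Fin d))}

lemma integral_sub_integral_le_mul_W1 [IsProbabilityMeasure μ] [IsProbabilityMeasure ν]
    (hμ : Integrable (fun x => ‖x‖) μ) (hν : Integrable (fun x => ‖x‖) ν)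
    {K : NNReal} {g : EuclideanSpace ℝ (Fin d) → ℝ} (hg : LipschitzWith K g) :
    ∫ x, g x ∂ν - ∫ x, g x ∂μ ≤ K * W1 μ ν := by
  rw [W1, ← smul_eq_mul, ← Real.sInf_smul_of_nonneg K.coe_nonneg]
  refine le_csInf (Set.Nonempty.smul_set ⟨_, μ.prod ν, Measure.fst_prod, Measure.snd_prod, rfl⟩) ?_
  rintro _ ⟨_, ⟨γ, hγμ, hγν, rfl⟩, rfl⟩
  exact integral_sub_integral_le_of_coupling hg hμ hν hγμ hγν

lemma W1_eq_zero_of_subsingleton [Subsingleton (EuclideanSpace ℝ (Fin d))] : W1 μ ν = 0 := by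
  have hcosts : { r : ℝ | ∃ γ : Measure (EuclideanSpace ℝ (Fin d) × EuclideanSpace ℝ (Fin d)),
      γ.map Prod.fst = μ ∧ γ.map Prod.snd = ν ∧ r = ∫ p, ‖p.1 - p.2‖ ∂γ } ⊆ {0} := by
    rintro _ ⟨γ, -, -, rfl⟩
    simp [Subsingleton.elim _ (0 : EuclideanSpace ℝ (Fin d))]
  rcases Set.subset_singleton_iff_eq.mp hcosts with hempty | hzero
  · rw [W1, hempty, Real.sInf_empty]
  · rw [W1, hzero, csInf_singleton]

end Wasserstein

lemma lipschitzWith_toNNReal_of_abs_sub_le {E : Type*} [SeminormedAddCommGroup E] {A : ℝ}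
    {f : E → ℝ} (hf : ∀ x y, |f x - f y| ≤ A * ‖x - y‖) : LipschitzWith A.toNNReal f :=
  LipschitzWith.of_dist_le_mul fun x y => by
    rw [Real.dist_eq, dist_eq_norm]
    exact (hf x y).trans (mul_le_mul_of_nonneg_right A.le_coe_toNNReal (norm_nonneg _))

lemma subsingleton_of_abs_sub_le_of_neg {E : Type*} [NormedAddCommGroup E] {A : ℝ} {f : E → ℝ}
    (hA : A < 0) (hf : ∀ x y, |f x - f y| ≤ A * ‖x - y‖) : Subsingleton E := by
  refine ⟨fun x y => by_contra fun hxy => ?_⟩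
  have hpos : 0 < ‖x - y‖ := norm_pos_iff.mpr (sub_ne_zero.mpr hxy)
  nlinarith [abs_nonneg (f x - f y), hf x y]

theorem generalization_bound_W1_general {d : ℕ} (A : ℝ)
    (μS μT : Measure (EuclideanSpace ℝ (Fin d)))
    [IsProbabilityMeasure μS] [IsProbabilityMeasure μT]
    (hμS : Integrable (fun x => ‖x‖) μS) (hμT : Integrable (fun x => ‖x‖) μT)
    (f : EuclideanSpace ℝ (Fin d) → ℝ)
    (hfLip : ∀ x y, |f x - f y| ≤ A * ‖x - y‖)
    (H : Set (EuclideanSpace ℝ (Fin d) → ℝ))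
    (hHLip : ∀ h ∈ H, ∀ x y, |h x - h y| ≤ A * ‖x - y‖) :
    ∀ h ∈ H,
      (∫ x, |h x - f x| ∂μT) ≤ (∫ x, |h x - f x| ∂μS) + 2 * A * W1 μS μT := by
  intro h hH
  rcases lt_or_ge A 0 with hA | hA
  · have := subsingleton_of_abs_sub_le_of_neg hA hfLip
    have hconst : (fun x => |h x - f x|) = fun _ => |h 0 - f 0| :=
      funext fun x => by rw [Subsingleton.elim x 0]
    simp [hconst, W1_eq_zero_of_subsingleton]
  · have hg : LipschitzWith (1 * (A.toNNReal + A.toNNReal)) fun x => |h x - f x| :=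
      lipschitzWith_one_norm.comp ((lipschitzWith_toNNReal_of_abs_sub_le (hHLip h hH)).sub
        (lipschitzWith_toNNReal_of_abs_sub_le hfLip))
    have hbound := integral_sub_integral_le_mul_W1 hμS hμT hg
    push_cast [Real.coe_toNNReal _ hA] at hbound
    linarith

theorem generalization_bound_W1 {d : ℕ} (A : ℝ)
    (μS μT : Measure (EuclideanSpace ℝ (Fin d)))
    [IsProbabilityMeasure μS] [IsProbabilityMeasure μT]
    (hμS : Integrable (fun x => ‖x‖) μS) (hμT : Integrable (fun x => ‖x‖) μT)
    (f : EuclideanSpace ℝ (Fin d) → ℝ)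
    (hf01 : ∀ x, f x ∈ Set.Icc (0 : ℝ) 1)
    (hfLip : ∀ x y, |f x - f y| ≤ A * ‖x - y‖)
    (H : Set (EuclideanSpace ℝ (Fin d) → ℝ))
    (hHLip : ∀ h ∈ H, ∀ x y, |h x - h y| ≤ A * ‖x - y‖) :
    ∀ h ∈ H,
      (∫ x, |h x - f x| ∂μT) ≤ (∫ x, |h x - f x| ∂μS) + 2 * A * W1 μS μT :=
  generalization_bound_W1_general A μS μT hμS hμT f hfLip H hHLip
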